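/- The quotient of the free abelian group ℤ³ by the subgroup generated by the three vectors (3, −3, 0), (0, 0, 6) and (6, 6, 2) is a finite abelian group of order 216, isomorphic to (ℤ/6ℤ) × (ℤ/36ℤ). -/
import Mathlib

private def phi : (ℤ × ℤ × ℤ) →+ ZMod 6 × ZMod 36 where
  toFun v := (((4 * v.1 + 3 * v.2.2 : ℤ) : ZMod 6), ((v.1 + v.2.1 - 6 * v.2.2 : ℤ) : ZMod 36))
  map_zero' := by simp
  map_add' a b := by
    simp only [Prod.fst_add, Prod.snd_add, Prod.mk_add_mk, Prod.mk.injEq]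
    constructor <;> push_cast <;> ring

private lemma phi_surj : Function.Surjective phi := by
  rintro ⟨a, b⟩
  refine ⟨((a.val : ℤ), (b.val : ℤ) - 7 * a.val, -(a.val : ℤ)), ?_⟩
  simp only [phi, AddMonoidHom.coe_mk, ZeroHom.coe_mk, Prod.mk.injEq]
  constructor
  · have : (4 * (a.val : ℤ) + 3 * -(a.val : ℤ)) = (a.val : ℤ) := by ring
    rw [this]
    simp [ZMod.intCast_cast, ZMod.natCast_val]
  · have : ((a.val : ℤ) + ((b.val : ℤ) - 7 * a.val) - 6 * -(a.val : ℤ)) = (b.val : ℤ) := by ring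
    rw [this]
    simp [ZMod.natCast_val]

private lemma phi_ker :
    phi.ker = AddSubgroup.closure ({(3, -3, 0), (0, 0, 6), (6, 6, 2)} : Set (ℤ × ℤ × ℤ)) := by
  apply le_antisymm
  · rintro ⟨x, y, z⟩ hv
    simp only [AddMonoidHom.mem_ker, phi, AddMonoidHom.coe_mk, ZeroHom.coe_mk, Prod.mk_eq_zero,
      ZMod.intCast_zmod_eq_zero_iff_dvd] at hv
    obtain ⟨⟨k, hk⟩, ⟨l, hl⟩⟩ := hv
    have h3 : (3 : ℤ) ∣ x := by omega
    have h2 : (2 : ℤ) ∣ z := by omega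
    obtain ⟨p, hp⟩ := h3
    obtain ⟨q, hq⟩ := h2
    have m1 : ((3, -3, 0) : ℤ × ℤ × ℤ) ∈ AddSubgroup.closure
        ({(3, -3, 0), (0, 0, 6), (6, 6, 2)} : Set (ℤ × ℤ × ℤ)) :=
      AddSubgroup.subset_closure (by simp)
    have m2 : ((0, 0, 6) : ℤ × ℤ × ℤ) ∈ AddSubgroup.closure
        ({(3, -3, 0), (0, 0, 6), (6, 6, 2)} : Set (ℤ × ℤ × ℤ)) :=
      AddSubgroup.subset_closure (by simp)
    have m3 : ((6, 6, 2) : ℤ × ℤ × ℤ) ∈ AddSubgroup.closure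
        ({(3, -3, 0), (0, 0, 6), (6, 6, 2)} : Set (ℤ × ℤ × ℤ)) :=
      AddSubgroup.subset_closure (by simp)
    have key : ((x, y, z) : ℤ × ℤ × ℤ) =
        (p - 6 * l - 2 * q) • ((3, -3, 0) : ℤ × ℤ × ℤ) + (-l) • ((0, 0, 6) : ℤ × ℤ × ℤ) +
          (3 * l + q) • ((6, 6, 2) : ℤ × ℤ × ℤ) := by
      simp only [Prod.smul_mk, smul_eq_mul, Prod.mk_add_mk, Prod.mk.injEq]
      refine ⟨by omega, by omega, by omega⟩
    rw [key]
    exact add_mem (add_mem (AddSubgroup.zsmul_mem _ m1 _) (AddSubgroup.zsmul_mem _ m2 _))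
      (AddSubgroup.zsmul_mem _ m3 _)
  · rw [AddSubgroup.closure_le]
    rintro v hv
    simp only [Set.mem_insert_iff, Set.mem_singleton_iff] at hv
    rcases hv with rfl | rfl | rfl <;>
      simp only [SetLike.mem_coe, AddMonoidHom.mem_ker, phi, AddMonoidHom.coe_mk,
        ZeroHom.coe_mk, Prod.mk_eq_zero] <;> constructor <;> decide

theorem quotient_Z3_order_216 :
    Nonempty
      ((ℤ × ℤ × ℤ) ⧸
          AddSubgroup.closure ({(3, -3, 0), (0, 0, 6), (6, 6, 2)} : Set (ℤ × ℤ × ℤ)) ≃+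
        ZMod 6 × ZMod 36) ∧
    Nat.card
      ((ℤ × ℤ × ℤ) ⧸
        AddSubgroup.closure ({(3, -3, 0), (0, 0, 6), (6, 6, 2)} : Set (ℤ × ℤ × ℤ))) = 216 := by
  have e : ((ℤ × ℤ × ℤ) ⧸
      AddSubgroup.closure ({(3, -3, 0), (0, 0, 6), (6, 6, 2)} : Set (ℤ × ℤ × ℤ))) ≃+
      ZMod 6 × ZMod 36 := by
    rw [← phi_ker]
    exact QuotientAddGroup.quotientKerEquivOfSurjective phi phi_surj
  refine ⟨⟨e⟩, ?_⟩
  rw [Nat.card_congr e.toEquiv, Nat.card_prod, Nat.card_zmod, Nat.card_zmod]
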